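/- The separator encoding map is not injective: for a sentence of 3 words, the crossing mention set {[1,2],[2,3]} and the nested mention set {[1,3],[2,2]} are distinct sets of intervals that yield the same separator sequence ({S}, {C,S}, {E,C}, {E}). -/

import Mathlib

/-
The separator sequence of `M` only records which words start a mention, which words end one and
which gaps lie strictly inside one, i.e. the sets `Prod.fst '' M`, `Prod.snd '' M` and
`⋃ p ∈ M, Ico p.1 p.2`. The crossing set `{[1,2],[2,3]}` and the nested set `{[1,3],[2,2]}` both
have starts `{1,2}`, ends `{2,3}` and interior gaps `Ico 1 3 = {1,2}`.
-/

inductive Marker | S | E | C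
deriving DecidableEq

/-- Separator sequence of a set of mentions (intervals). Gap `k` lies between word `k` and word `k+1`. -/
def sep (M : Set (ℕ × ℕ)) (k : ℕ) : Set Marker :=
  {m | (m = Marker.S ∧ ∃ p ∈ M, p.1 = k + 1) ∨
       (m = Marker.E ∧ ∃ p ∈ M, p.2 = k) ∨
       (m = Marker.C ∧ ∃ p ∈ M, p.1 ≤ k ∧ k + 1 ≤ p.2)}

/-- `M` is a set of mentions over a sentence of `n` words. -/
def Valid (n : ℕ) (M : Set (ℕ × ℕ)) : Prop :=
  ∀ p ∈ M, 1 ≤ p.1 ∧ p.1 ≤ p.2 ∧ p.2 ≤ n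

open Set

section Sep

variable {M N : Set (ℕ × ℕ)} {k : ℕ}

theorem S_mem_sep_iff : Marker.S ∈ sep M k ↔ k + 1 ∈ Prod.fst '' M := by
  simp [sep]

theorem E_mem_sep_iff : Marker.E ∈ sep M k ↔ k ∈ Prod.snd '' M := by
  simp [sep]

theorem C_mem_sep_iff : Marker.C ∈ sep M k ↔ k ∈ ⋃ p ∈ M, Ico p.1 p.2 := by
  simp only [sep, mem_ofPred_eq, mem_iUnion, mem_Ico, exists_prop, reduceCtorEq, false_and,
    false_or, true_and, Nat.lt_iff_add_one_le]

theorem sep_eq_sep_of_image_eq (hS : Prod.fst '' M = Prod.fst '' N)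
    (hE : Prod.snd '' M = Prod.snd '' N)
    (hC : ⋃ p ∈ M, Ico p.1 p.2 = ⋃ p ∈ N, Ico p.1 p.2) : sep M = sep N := by
  funext k
  ext m
  cases m
  · rw [S_mem_sep_iff, S_mem_sep_iff, hS]
  · rw [E_mem_sep_iff, E_mem_sep_iff, hE]
  · rw [C_mem_sep_iff, C_mem_sep_iff, hC]

end Sep

theorem encoding_not_injective :
    ({((1:ℕ), (2:ℕ)), (2, 3)} : Set (ℕ × ℕ)) ≠ ({(1, 3), (2, 2)} : Set (ℕ × ℕ)) ∧
    sep {((1:ℕ), (2:ℕ)), (2, 3)} = sep {(1, 3), (2, 2)} ∧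
    sep ({((1:ℕ), (2:ℕ)), (2, 3)} : Set (ℕ × ℕ)) 0 = {Marker.S} ∧
    sep ({((1:ℕ), (2:ℕ)), (2, 3)} : Set (ℕ × ℕ)) 1 = {Marker.C, Marker.S} ∧
    sep ({((1:ℕ), (2:ℕ)), (2, 3)} : Set (ℕ × ℕ)) 2 = {Marker.E, Marker.C} ∧
    sep ({((1:ℕ), (2:ℕ)), (2, 3)} : Set (ℕ × ℕ)) 3 = {Marker.E} := by
  have hne : ({((1:ℕ), (2:ℕ)), (2, 3)} : Set (ℕ × ℕ)) ≠ {(1, 3), (2, 2)} := fun h => by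
    simpa using h.subset (mem_insert _ _)
  have hgaps : ⋃ p ∈ ({((1:ℕ), (2:ℕ)), (2, 3)} : Set (ℕ × ℕ)), Ico p.1 p.2 =
      ⋃ p ∈ ({(1, 3), (2, 2)} : Set (ℕ × ℕ)), Ico p.1 p.2 := by
    simp only [biUnion_insert, biUnion_singleton, Ico_self, union_empty]
    exact Ico_union_Ico_eq_Ico (by norm_num) (by norm_num)
  have hsep := sep_eq_sep_of_image_eq (by simp [image_pair, pair_comm])
    (by simp [image_pair, pair_comm]) hgaps
  refine ⟨hne, hsep, ?_, ?_, ?_, ?_⟩ <;>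
    ext m <;> cases m <;> simp [S_mem_sep_iff, E_mem_sep_iff, C_mem_sep_iff]
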